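/- Let A, A_h : L²(Ω) → Y be compact bounded linear operators with ‖A_h − A‖ ≤ h, and let G be a strictly positive definite self-adjoint bounded linear operator on L²(Ω). Then there exist constants C₂(A,G) > 0 and h₀(A,G) > 0, depending only on A and G, such that for all h ∈ (0, h₀]: ‖(G + A_h*A_h)⁻¹A_h* − (G + A*A)⁻¹A*‖ ≤ C₂(A,G) h. -/

import Mathlib

/-!
Coercivity of `G` passes to `G + B* B` for every `B`, so all these operators are invertible with
inverse of norm at most `1 / c`, uniformly in `B`. The identity
`T'⁻¹ B' - T⁻¹ B = T'⁻¹ (B' - B) + T'⁻¹ (T - T') T⁻¹ B`, together with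
`‖A_h* A_h - A* A‖ ≤ (‖A_h‖ + ‖A‖) ‖A_h - A‖`, then gives the bound with
`C₂ = 1 / c + (2 ‖A‖ + 1) ‖A‖ / c²` and `h₀ = 1`.
-/

open MeasureTheory ContinuousLinearMap
open scoped NNReal InnerProductSpace RealInnerProductSpace

namespace ContinuousLinearMap

section Perturbation

variable {𝕜 E F : Type*} [NontriviallyNormedField 𝕜]
  [NormedAddCommGroup E] [NormedSpace 𝕜 E] [NormedAddCommGroup F] [NormedSpace 𝕜 F]

theorem ring_inverse_comp_sub_ring_inverse_comp {T T' : E →L[𝕜] E} (hT : IsUnit T)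
    (hT' : IsUnit T') (B B' : F →L[𝕜] E) :
    Ring.inverse T' ∘L B' - Ring.inverse T ∘L B =
      Ring.inverse T' ∘L (B' - B) + Ring.inverse T' ∘L (T - T') ∘L Ring.inverse T ∘L B := by
  have hT'T' : Ring.inverse T' ∘L T' = 1 := Ring.inverse_mul_cancel T' hT'
  have hTT : T ∘L Ring.inverse T = 1 := Ring.mul_inverse_cancel T hT
  ext x
  have h₁ := congr($hT'T' (Ring.inverse T (B x)))
  have h₂ := congr($hTT (B x))
  simp only [comp_apply, one_apply_eq_self] at h₁ h₂
  simp only [sub_apply, add_apply, comp_apply, map_sub, h₁, h₂]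
  abel

theorem norm_ring_inverse_comp_sub_ring_inverse_comp_le {T T' : E →L[𝕜] E} (hT : IsUnit T)
    (hT' : IsUnit T') (B B' : F →L[𝕜] E) :
    ‖Ring.inverse T' ∘L B' - Ring.inverse T ∘L B‖ ≤
      ‖Ring.inverse T'‖ * ‖B' - B‖ +
        ‖Ring.inverse T'‖ * ‖T - T'‖ * ‖Ring.inverse T‖ * ‖B‖ := by
  rw [ring_inverse_comp_sub_ring_inverse_comp hT hT' B B']
  have hmid : ‖(T - T') ∘L Ring.inverse T ∘L B‖ ≤ ‖T - T'‖ * (‖Ring.inverse T‖ * ‖B‖) :=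
    (opNorm_comp_le _ _).trans (by gcongr; exact opNorm_comp_le _ _)
  refine (norm_add_le _ _).trans (add_le_add (opNorm_comp_le _ _) ?_)
  calc ‖Ring.inverse T' ∘L (T - T') ∘L Ring.inverse T ∘L B‖
      ≤ ‖Ring.inverse T'‖ * (‖T - T'‖ * (‖Ring.inverse T‖ * ‖B‖)) :=
        (opNorm_comp_le _ _).trans (by gcongr)
    _ = _ := by ring

end Perturbation

section Hilbert

variable {𝕜 E F : Type*} [RCLike 𝕜]
  [NormedAddCommGroup E] [InnerProductSpace 𝕜 E] [CompleteSpace E]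
  [NormedAddCommGroup F] [InnerProductSpace 𝕜 F] [CompleteSpace F]

theorem norm_ring_inverse_le_of_forall_le_norm_inner_map (T : E →L[𝕜] E) {c : ℝ≥0}
    (hc : 0 < c) (h : ∀ x, ‖x‖ ^ 2 * c ≤ ‖⟪T x, x⟫_𝕜‖) : ‖Ring.inverse T‖ ≤ (c : ℝ)⁻¹ := by
  obtain ⟨u, rfl⟩ := isUnit_of_forall_le_norm_inner_map T hc h
  rw [Ring.inverse_unit]
  refine opNorm_le_bound _ (by positivity) fun y => ?_
  have hy : (u : E →L[𝕜] E) ((↑u⁻¹ : E →L[𝕜] E) y) = y := congr($u.mul_inv y)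
  simpa [hy] using bound_of_antilipschitz _ (antilipschitz_of_forall_le_inner_map _ hc h)
    ((↑u⁻¹ : E →L[𝕜] E) y)

theorem norm_adjoint_comp_self_sub_adjoint_comp_self_le (A B : E →L[𝕜] F) :
    ‖adjoint B ∘L B - adjoint A ∘L A‖ ≤ (‖B‖ + ‖A‖) * ‖B - A‖ := by
  have hsplit :
      adjoint B ∘L B - adjoint A ∘L A = adjoint B ∘L (B - A) + adjoint (B - A) ∘L A := by
    simp only [map_sub, comp_sub, sub_comp]
    abel
  rw [hsplit]
  calc ‖adjoint B ∘L (B - A) + adjoint (B - A) ∘L A‖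
      ≤ ‖B‖ * ‖B - A‖ + ‖B - A‖ * ‖A‖ := by
        refine (norm_add_le _ _).trans (add_le_add ?_ ?_) <;>
          exact (opNorm_comp_le _ _).trans_eq (by rw [LinearIsometryEquiv.norm_map])
    _ = (‖B‖ + ‖A‖) * ‖B - A‖ := by ring

theorem le_norm_inner_add_adjoint_comp_self_apply {G : E →L[𝕜] E} {c : ℝ≥0}
    (hG : ∀ x, c * ‖x‖ ^ 2 ≤ RCLike.re ⟪G x, x⟫_𝕜) (B : E →L[𝕜] F) (x : E) :
    ‖x‖ ^ 2 * c ≤ ‖⟪(G + adjoint B ∘L B) x, x⟫_𝕜‖ :=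
  calc ‖x‖ ^ 2 * c ≤ RCLike.re ⟪G x, x⟫_𝕜 + ‖B x‖ ^ 2 := by nlinarith [hG x, sq_nonneg ‖B x‖]
    _ = RCLike.re ⟪(G + adjoint B ∘L B) x, x⟫_𝕜 := by
        rw [add_apply, inner_add_left, map_add, apply_norm_sq_eq_inner_adjoint_left]
    _ ≤ ‖⟪(G + adjoint B ∘L B) x, x⟫_𝕜‖ := RCLike.re_le_norm _

end Hilbert

end ContinuousLinearMap

theorem stmt_4_general
    {d : ℕ}
    (ν : Measure (EuclideanSpace ℝ (Fin d)))
    {Y : Type*} [NormedAddCommGroup Y] [InnerProductSpace ℝ Y] [CompleteSpace Y]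
    (A : Lp ℝ 2 ν →L[ℝ] Y)
    (G : Lp ℝ 2 ν →L[ℝ] Lp ℝ 2 ν)
    (c : ℝ) (hc : 0 < c) (hGpos : ∀ x : Lp ℝ 2 ν, c * ‖x‖ ^ 2 ≤ ⟪x, G x⟫) :
    ∃ C₂ > (0 : ℝ), ∃ h₀ > (0 : ℝ), ∀ h : ℝ, 0 < h → h ≤ h₀ →
      ∀ Ah : Lp ℝ 2 ν →L[ℝ] Y, IsCompactOperator ⇑Ah → ‖Ah - A‖ ≤ h →
        ‖Ring.inverse (G + adjoint Ah ∘L Ah) ∘L adjoint Ah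
            - Ring.inverse (G + adjoint A ∘L A) ∘L adjoint A‖ ≤ C₂ * h := by
  lift c to ℝ≥0 using hc.le
  replace hc : 0 < c := mod_cast hc
  have hcoercive (B : Lp ℝ 2 ν →L[ℝ] Y) :=
    le_norm_inner_add_adjoint_comp_self_apply (fun x => by simpa [real_inner_comm] using hGpos x) B
  have hunit B := isUnit_of_forall_le_norm_inner_map _ hc (hcoercive B)
  have hinv B := norm_ring_inverse_le_of_forall_le_norm_inner_map _ hc (hcoercive B)
  refine ⟨(c : ℝ)⁻¹ + (c : ℝ)⁻¹ * (2 * ‖A‖ + 1) * (c : ℝ)⁻¹ * ‖A‖, by positivity, 1, one_pos,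
    fun h _ hh₀ Ah _ hAh => ?_⟩
  have hAh_le : ‖Ah‖ ≤ ‖A‖ + 1 := by linarith [norm_le_norm_add_norm_sub' Ah A]
  have hgram : ‖(G + adjoint A ∘L A) - (G + adjoint Ah ∘L Ah)‖ ≤ (2 * ‖A‖ + 1) * h := by
    rw [add_sub_add_left_eq_sub, norm_sub_rev]
    exact (norm_adjoint_comp_self_sub_adjoint_comp_self_le A Ah).trans
      (mul_le_mul (by linarith) hAh (norm_nonneg _) (by positivity))
  have hadj : ‖adjoint Ah - adjoint A‖ ≤ h := by rwa [← map_sub, LinearIsometryEquiv.norm_map]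
  calc _ ≤ (c : ℝ)⁻¹ * h + (c : ℝ)⁻¹ * ((2 * ‖A‖ + 1) * h) * (c : ℝ)⁻¹ * ‖A‖ := by
        refine (norm_ring_inverse_comp_sub_ring_inverse_comp_le (hunit A) (hunit Ah) _ _).trans ?_
        rw [LinearIsometryEquiv.norm_map]
        gcongr
        exacts [hinv Ah, hinv Ah, hinv A]
    _ = _ := by ring

/-- **Lemma 2, inequality (15).** There are constants `C₂(A,G) > 0` and `h₀(A,G) > 0`,
depending only on `A` and `G`, such that for all `h ∈ (0, h₀]` and every compact `A_h` with
`‖A_h − A‖ ≤ h` one has `‖(G + A_h*A_h)⁻¹A_h* − (G + A*A)⁻¹A*‖ ≤ C₂(A,G) h`. -/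
theorem stmt_4
    {d : ℕ} (Ω : Set (EuclideanSpace ℝ (Fin d)))
    (hΩ_open : IsOpen Ω) (hΩ_bdd : Bornology.IsBounded Ω)
    (ν : Measure (EuclideanSpace ℝ (Fin d))) (hν : ν = volume.restrict Ω)
    {Y : Type*} [NormedAddCommGroup Y] [InnerProductSpace ℝ Y] [CompleteSpace Y]
    (A : Lp ℝ 2 ν →L[ℝ] Y) (hA : IsCompactOperator ⇑A)
    (G : Lp ℝ 2 ν →L[ℝ] Lp ℝ 2 ν) (hGsa : IsSelfAdjoint G)
    (c : ℝ) (hc : 0 < c) (hGpos : ∀ x : Lp ℝ 2 ν, c * ‖x‖ ^ 2 ≤ ⟪x, G x⟫) :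
    ∃ C₂ > (0 : ℝ), ∃ h₀ > (0 : ℝ), ∀ h : ℝ, 0 < h → h ≤ h₀ →
      ∀ Ah : Lp ℝ 2 ν →L[ℝ] Y, IsCompactOperator ⇑Ah → ‖Ah - A‖ ≤ h →
        ‖Ring.inverse (G + adjoint Ah ∘L Ah) ∘L adjoint Ah
            - Ring.inverse (G + adjoint A ∘L A) ∘L adjoint A‖ ≤ C₂ * h :=
  stmt_4_general ν A G c hc hGpos
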